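/- arXiv:math/0608277 — 5 statements merged into one kernel-verified Lean document; each statement's English description precedes it below -/
import Mathlib

section
/- For every regularized wavelet set W, the map h̃_W is a measurable bijection of [0,1), and there exist a measurable partition {A_k}_{k∈ℤ} of [1/2,1) and a measurable partition {B_k}_{k∈ℤ} of [0,1/2) such that h̃_W(x) = frac(2^k x) for x ∈ A_k and h̃_W(x) = frac(2^k(x−1)) for x ∈ B_k, where frac(y) = y − ⌊y⌋ denotes the fractional part. -/
open MeasureTheory Set Real Filter
open scoped symmDiff Classical

noncomputable section

/-- The Littlewood–Paley set `E = [-2π,-π) ∪ [π,2π)`. -/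
def E : Set ℝ := Ico (-(2*π)) (-π) ∪ Ico π (2*π)

/-- `tau x = x + 2jπ`, where `j` is the unique integer with `x + 2jπ ∈ E`. -/
def tau (x : ℝ) : ℝ :=
  if x - 2*π*(⌊x/(2*π)⌋ : ℝ) < π then x - 2*π*(⌊x/(2*π)⌋ : ℝ) - 2*π
  else x - 2*π*(⌊x/(2*π)⌋ : ℝ)

/-- `delta x = 2^k x`, where (for `x ≠ 0`) `k` is the unique integer with `2^k x ∈ E`. -/
def delta (x : ℝ) : ℝ :=
  if 0 < x then (2:ℝ)^(⌈Real.logb 2 (π/x)⌉) * x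
  else (2:ℝ)^(⌊Real.logb 2 (2*π/(-x))⌋) * x

/-- The map `ξ : E → [0,1)`. -/
def xiMap (x : ℝ) : ℝ := if x < 0 then x/(2*π) + 1 else x/(2*π)

/-- The inverse `ξ⁻¹ : [0,1) → E`. -/
def xiInv (y : ℝ) : ℝ := if y < 1/2 then 2*π*(y-1) else 2*π*y

/-- The translates `{W + 2kπ}_{k ∈ ℤ}` form a partition of `ℝ`. -/
def TransPartition (W : Set ℝ) : Prop :=
  (⋃ k : ℤ, (fun x : ℝ => x + 2*π*(k:ℝ)) '' W) = univ ∧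
  Pairwise fun k l : ℤ =>
    Disjoint ((fun x : ℝ => x + 2*π*(k:ℝ)) '' W) ((fun x : ℝ => x + 2*π*(l:ℝ)) '' W)

/-- The dilates `{2^k W}_{k ∈ ℤ}` form a partition of `ℝ \ {0}`. -/
def DilPartition (W : Set ℝ) : Prop :=
  (⋃ k : ℤ, (fun x : ℝ => (2:ℝ)^k * x) '' W) = {(0:ℝ)}ᶜ ∧
  Pairwise fun k l : ℤ =>
    Disjoint ((fun x : ℝ => (2:ℝ)^k * x) '' W) ((fun x : ℝ => (2:ℝ)^l * x) '' W)

/-- A regularized wavelet set. -/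
def IsRegularizedWaveletSet (W : Set ℝ) : Prop :=
  MeasurableSet W ∧ TransPartition W ∧ DilPartition W

/-- The wavelet induced isomorphism `h̃_W = ξ ∘ τ|_W ∘ (δ|_W)⁻¹ ∘ ξ⁻¹` of `[0,1)`. -/
def hIso (W : Set ℝ) : ℝ → ℝ :=
  fun t => xiMap (tau (Function.invFunOn delta W (xiInv t)))

/-- The class of wavelet induced maps of `[0,1)` (Proposition 2.3 (i)-(ii)). -/
def IsWaveletInduced (h : ℝ → ℝ) : Prop :=
  Set.BijOn h (Ico (0:ℝ) 1) (Ico (0:ℝ) 1) ∧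
  Measurable ((Ico (0:ℝ) 1).restrict h) ∧
  ∃ A B : ℤ → Set ℝ,
    (∀ k, MeasurableSet (A k)) ∧ (∀ k, MeasurableSet (B k)) ∧
    (⋃ k, A k) = Ico (1/2 : ℝ) 1 ∧ Pairwise (Function.onFun Disjoint A) ∧
    (⋃ k, B k) = Ico (0:ℝ) (1/2) ∧ Pairwise (Function.onFun Disjoint B) ∧
    (∀ k, ∀ x ∈ A k, h x = Int.fract ((2:ℝ)^k * x)) ∧
    (∀ k, ∀ x ∈ B k, h x = Int.fract ((2:ℝ)^k * (x - 1)))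

/-- The class `WI₁`. -/
def MemWI1 (f : ℝ → ℝ) : Prop :=
  ∃ A B : ℕ → Set ℝ,
    (∀ k, MeasurableSet (A k)) ∧ (∀ k, MeasurableSet (B k)) ∧
    (⋃ k, A k) = Ico (1/2 : ℝ) 1 ∧ Pairwise (Function.onFun Disjoint A) ∧
    (⋃ k, B k) = Ico (0:ℝ) (1/2) ∧ Pairwise (Function.onFun Disjoint B) ∧
    (∀ k, ∀ x ∈ A k, f x = x / 2^(k+1)) ∧
    (∀ k, ∀ x ∈ B k, f x = (x - 1) / 2^(k+1) + 1)

/-- The class `WI₂`. -/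
def MemWI2 (g : ℝ → ℝ) : Prop :=
  Measurable ((Ico (0:ℝ) 1).restrict g) ∧
  Set.MapsTo g (Ico (0:ℝ) 1) (Ico (0:ℝ) 1) ∧
  Set.InjOn g (Ico (0:ℝ) 1) ∧
  ∀ x ∈ Ico (0:ℝ) 1, ∃ k l : ℕ, g x = (x + l) / 2^k

/-- The Schröder–Cantor–Bernstein map `u ⋄ v` for injections between arbitrary types. -/
def scb {α β : Type*} (u : α → β) (v : β → α) : α → β :=
  fun x =>
    if x ∈ ⋃ k : ℕ, (v ∘ u)^[k] '' (Set.range v)ᶜ then u x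
    else if h2 : x ∈ Set.range v then Classical.choose h2
    else u x

/-- The Schröder–Cantor–Bernstein map `u ⋄ v` for maps of `[0,1)`. -/
def scbOn (u v : ℝ → ℝ) : ℝ → ℝ :=
  fun x =>
    if x ∈ ⋃ k : ℕ, (v ∘ u)^[k] '' (Ico (0:ℝ) 1 \ v '' (Ico (0:ℝ) 1)) then u x
    else Function.invFunOn v (Ico (0:ℝ) 1) x

/-- The metric `d` on wavelet sets. -/
def dws (W₁ W₂ : Set ℝ) : ℝ :=
  Real.sqrt (volume (W₁ ∆ W₂)).toReal + Real.sqrt (∫ x in W₁ ∆ W₂, |x|⁻¹)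

/-- The measure `ν` on `[0,1)` with density `(1-x)⁻¹` on `[0,1/2)` and `x⁻¹` on `[1/2,1)`. -/
def nuMeasure : Measure ℝ :=
  volume.withDensity (fun x =>
    ENNReal.ofReal (if x ∈ Ico (0:ℝ) (1/2) then (1-x)⁻¹
      else if x ∈ Ico (1/2:ℝ) 1 then x⁻¹ else 0))


/-!
`ξ` and `ξ⁻¹` are mutually inverse bijections between `E` and `[0,1)`, and the two partition
properties say that `τ` and `δ` restrict to bijections `W → E`, so `h̃_W` is a composite of
bijections. Since `τ x = ξ⁻¹ (frac (x / 2π))`, we get `h̃_W t = frac (w / 2π)` for the point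
`w ∈ W` with `δ w = ξ⁻¹ t`. Grouping the `t` by the exponent `k` with `w = 2^k ξ⁻¹ t` cuts `[0,1)`
into countably many measurable pieces on which `h̃_W` is `frac (2^k t)` or `frac (2^k (t - 1))`,
which gives both the partitions and the measurability.
-/

lemma ne_zero_of_mem_E {x : ℝ} (hx : x ∈ E) : x ≠ 0 := by
  rintro rfl
  rcases hx with ⟨h1, h2⟩ | ⟨h1, h2⟩ <;> linarith [pi_pos]

lemma xiInv_ne_zero (t : ℝ) : xiInv t ≠ 0 := by
  unfold xiInv
  split_ifs with ht
  · exact mul_ne_zero (by positivity) (by linarith)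
  · exact mul_ne_zero (by positivity) (by linarith)

lemma measurable_xiInv : Measurable xiInv :=
  Measurable.ite measurableSet_Iio (by fun_prop) (by fun_prop)

lemma mapsTo_xiInv : MapsTo xiInv (Ico 0 1) E := by
  rintro t ⟨h0, h1⟩
  have hπ := pi_pos
  unfold xiInv
  split_ifs with ht
  · left; constructor <;> nlinarith
  · right; constructor <;> nlinarith

lemma mapsTo_xiMap : MapsTo xiMap E (Ico 0 1) := by
  have hπ : 0 < 2 * π := by positivity
  rintro x (⟨h1, h2⟩ | ⟨h1, h2⟩)
  · have hlo : -1 ≤ x / (2 * π) := by rw [le_div_iff₀ hπ]; linarith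
    have hhi : x / (2 * π) < 0 := div_neg_of_neg_of_pos (by linarith) hπ
    rw [xiMap, if_pos (by linarith)]
    constructor <;> linarith
  · have hlo : 0 ≤ x / (2 * π) := div_nonneg (by linarith) hπ.le
    have hhi : x / (2 * π) < 1 := by rw [div_lt_iff₀ hπ]; linarith
    rw [xiMap, if_neg (by linarith [pi_pos])]
    exact ⟨hlo, hhi⟩

lemma invOn_xiInv_xiMap : InvOn xiInv xiMap E (Ico 0 1) := by
  have hπ := pi_pos
  constructor
  · rintro x (⟨h1, h2⟩ | ⟨h1, h2⟩)
    · rw [xiMap, if_pos (by linarith), xiInv, if_pos]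
      · field_simp; ring
      · rw [← lt_sub_iff_add_lt, div_lt_iff₀ (by positivity)]; linarith
    · rw [xiMap, if_neg (by linarith), xiInv, if_neg]
      · field_simp
      · rw [not_lt, le_div_iff₀ (by positivity)]; linarith
  · rintro t ⟨h0, h1⟩
    unfold xiInv
    split_ifs with ht
    · rw [xiMap, if_pos (by nlinarith)]; field_simp; ring
    · rw [xiMap, if_neg (not_lt.2 (by positivity))]; field_simp

lemma bijOn_xiMap : BijOn xiMap E (Ico 0 1) :=
  invOn_xiInv_xiMap.bijOn mapsTo_xiMap mapsTo_xiInv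

lemma bijOn_xiInv : BijOn xiInv (Ico 0 1) E :=
  bijOn_xiMap.symm invOn_xiInv_xiMap.symm

lemma fract_div_two_pi_eq_xiMap {x : ℝ} (hx : x ∈ E) : Int.fract (x / (2 * π)) = xiMap x := by
  obtain ⟨h0, h1⟩ := mapsTo_xiMap hx
  refine Int.fract_eq_iff.2 ⟨h0, h1, ?_⟩
  unfold xiMap
  split_ifs
  · exact ⟨-1, by push_cast; ring⟩
  · exact ⟨0, by push_cast; ring⟩

lemma tau_eq_xiInv_fract (x : ℝ) : tau x = xiInv (Int.fract (x / (2 * π))) := by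
  have hπ : 0 < 2 * π := by positivity
  have hr : x - 2 * π * ⌊x / (2 * π)⌋ = 2 * π * Int.fract (x / (2 * π)) := by
    rw [Int.fract, mul_sub, mul_div_cancel₀ _ hπ.ne']
  have hlt : 2 * π * Int.fract (x / (2 * π)) < π ↔ Int.fract (x / (2 * π)) < 1 / 2 := by
    constructor <;> intro h <;> nlinarith [pi_pos]
  rw [tau, xiInv, hr]
  by_cases h : Int.fract (x / (2 * π)) < 1 / 2
  · rw [if_pos (hlt.2 h), if_pos h]; ring
  · rw [if_neg (mt hlt.1 h), if_neg h]

lemma xiMap_tau (x : ℝ) : xiMap (tau x) = Int.fract (x / (2 * π)) := by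
  rw [tau_eq_xiInv_fract, invOn_xiInv_xiMap.2 ⟨Int.fract_nonneg _, Int.fract_lt_one _⟩]

lemma tau_mem_E (x : ℝ) : tau x ∈ E := by
  rw [tau_eq_xiInv_fract]
  exact mapsTo_xiInv ⟨Int.fract_nonneg _, Int.fract_lt_one _⟩

lemma tau_eq_self {x : ℝ} (hx : x ∈ E) : tau x = x := by
  rw [tau_eq_xiInv_fract, fract_div_two_pi_eq_xiMap hx, invOn_xiInv_xiMap.1 hx]

lemma tau_add_two_pi_mul_intCast (x : ℝ) (k : ℤ) : tau (x + 2 * π * k) = tau x := by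
  rw [tau_eq_xiInv_fract, tau_eq_xiInv_fract, add_div, mul_div_cancel_left₀ _ (by positivity),
    Int.fract_add_intCast]

lemma exists_delta_eq_zpow_mul (x : ℝ) : ∃ k : ℤ, delta x = (2:ℝ) ^ k * x := by
  unfold delta
  split_ifs <;> exact ⟨_, rfl⟩

lemma delta_mem_E {x : ℝ} (hx : x ≠ 0) : delta x ∈ E := by
  rcases hx.lt_or_gt with hneg | hpos
  · have hr : 0 < 2 * π / -x := div_pos (by positivity) (neg_pos.2 hneg)
    have hk : ⌊logb 2 (2 * π / -x)⌋ = Int.log 2 (2 * π / -x) := by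
      exact_mod_cast Real.floor_logb_natCast (b := 2) hr.le
    have hle := Int.zpow_log_le_self (b := 2) one_lt_two hr
    have hlt := Int.lt_zpow_succ_log_self (b := 2) one_lt_two (2 * π / -x)
    push_cast at hle hlt
    rw [zpow_add_one₀ two_ne_zero] at hlt
    rw [le_div_iff₀ (neg_pos.2 hneg)] at hle
    rw [div_lt_iff₀ (neg_pos.2 hneg)] at hlt
    rw [delta, if_neg hneg.not_gt, hk]
    left; constructor <;> nlinarith
  · have hr : 0 < π / x := div_pos pi_pos hpos
    have hk : ⌈logb 2 (π / x)⌉ = Int.clog 2 (π / x) := by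
      exact_mod_cast Real.ceil_logb_natCast (b := 2) hr.le
    have hle := Int.self_le_zpow_clog (b := 2) one_lt_two (π / x)
    have hlt := Int.zpow_pred_clog_lt_self (b := 2) one_lt_two hr
    push_cast at hle hlt
    rw [zpow_sub_one₀ two_ne_zero] at hlt
    rw [div_le_iff₀ hpos] at hle
    rw [lt_div_iff₀ hpos] at hlt
    rw [delta, if_pos hpos, hk]
    right; constructor <;> nlinarith

lemma eq_zero_of_zpow_mul_mem_E {x : ℝ} {m : ℤ} (hx : x ∈ E) (hm : (2:ℝ) ^ m * x ∈ E) :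
    m = 0 := by
  have hpos : (0:ℝ) < 2 ^ m := zpow_pos two_pos m
  have hlt : (2:ℝ) ^ m < 2 ^ (1:ℤ) := by
    rw [zpow_one]
    rcases hx with ⟨hx1, hx2⟩ | ⟨hx1, hx2⟩ <;> rcases hm with ⟨hm1, hm2⟩ | ⟨hm1, hm2⟩ <;>
      nlinarith [pi_pos]
  have hgt : (2:ℝ) ^ (-1:ℤ) < 2 ^ m := by
    rw [zpow_neg_one]
    rcases hx with ⟨hx1, hx2⟩ | ⟨hx1, hx2⟩ <;> rcases hm with ⟨hm1, hm2⟩ | ⟨hm1, hm2⟩ <;>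
      nlinarith [pi_pos]
  rw [zpow_lt_zpow_iff_right₀ one_lt_two] at hlt hgt
  omega

lemma delta_eq_self {x : ℝ} (hx : x ∈ E) : delta x = x := by
  obtain ⟨k, hk⟩ := exists_delta_eq_zpow_mul x
  have hk0 : k = 0 := eq_zero_of_zpow_mul_mem_E hx (hk ▸ delta_mem_E (ne_zero_of_mem_E hx))
  rw [hk, hk0, zpow_zero, one_mul]

lemma delta_zpow_mul {x : ℝ} (hx : x ≠ 0) (m : ℤ) : delta ((2:ℝ) ^ m * x) = delta x := by
  obtain ⟨k, hk⟩ := exists_delta_eq_zpow_mul x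
  obtain ⟨l, hl⟩ := exists_delta_eq_zpow_mul ((2:ℝ) ^ m * x)
  have hmx : (2:ℝ) ^ m * x ≠ 0 := mul_ne_zero (zpow_ne_zero m two_ne_zero) hx
  have hrel : delta ((2:ℝ) ^ m * x) = (2:ℝ) ^ (l + m - k) * delta x := by
    rw [hl, hk, ← mul_assoc, ← mul_assoc, ← zpow_add₀ two_ne_zero, ← zpow_add₀ two_ne_zero]
    ring_nf
  have h0 : l + m - k = 0 := eq_zero_of_zpow_mul_mem_E (delta_mem_E hx) (hrel ▸ delta_mem_E hmx)
  rw [hrel, h0, zpow_zero, one_mul]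

namespace TransPartition

variable {W : Set ℝ} (hT : TransPartition W)
include hT

lemma eq_of_add_two_pi_mul_mem {x : ℝ} {k l : ℤ} (hk : x + 2 * π * k ∈ W)
    (hl : x + 2 * π * l ∈ W) : k = l := by
  by_contra hkl
  have hk' : x ∈ (fun y : ℝ => y + 2 * π * ((-k : ℤ) : ℝ)) '' W := ⟨_, hk, by push_cast; ring⟩
  have hl' : x ∈ (fun y : ℝ => y + 2 * π * ((-l : ℤ) : ℝ)) '' W := ⟨_, hl, by push_cast; ring⟩
  exact disjoint_left.1 (hT.2 (neg_injective.ne hkl)) hk' hl'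

lemma bijOn_tau : BijOn tau W E := by
  refine ⟨fun w _ => tau_mem_E w, fun w₁ hw₁ w₂ hw₂ heq => ?_, fun y hy => ?_⟩
  · obtain ⟨n, hn⟩ := Int.fract_eq_fract.1 (by simpa only [xiMap_tau] using congrArg xiMap heq)
    have hw : w₁ = w₂ + 2 * π * n := by
      field_simp at hn
      linarith
    have hn0 : n = 0 := hT.eq_of_add_two_pi_mul_mem (hw ▸ hw₁) (by simpa using hw₂)
    rw [hw, hn0, Int.cast_zero, mul_zero, add_zero]
  · obtain ⟨k, w, hw, rfl⟩ := mem_iUnion.1 (hT.1.symm ▸ mem_univ y)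
    exact ⟨w, hw, by rw [← tau_add_two_pi_mul_intCast w k, tau_eq_self hy]⟩

end TransPartition

namespace DilPartition

variable {W : Set ℝ} (hD : DilPartition W)
include hD

lemma zero_notMem : (0:ℝ) ∉ W := fun h0 => by
  have h : (0:ℝ) ∈ ⋃ k : ℤ, (fun x : ℝ => (2:ℝ) ^ k * x) '' W :=
    mem_iUnion.2 ⟨0, 0, h0, mul_zero _⟩
  exact (hD.1 ▸ h) rfl

lemma eq_of_zpow_mul_mem {x : ℝ} {k l : ℤ} (hk : (2:ℝ) ^ k * x ∈ W) (hl : (2:ℝ) ^ l * x ∈ W) :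
    k = l := by
  by_contra hkl
  have hk' : x ∈ (fun y : ℝ => (2:ℝ) ^ (-k) * y) '' W :=
    ⟨_, hk, by beta_reduce; rw [zpow_neg, inv_mul_cancel_left₀ (zpow_ne_zero k two_ne_zero)]⟩
  have hl' : x ∈ (fun y : ℝ => (2:ℝ) ^ (-l) * y) '' W :=
    ⟨_, hl, by beta_reduce; rw [zpow_neg, inv_mul_cancel_left₀ (zpow_ne_zero l two_ne_zero)]⟩
  exact disjoint_left.1 (hD.2 (neg_injective.ne hkl)) hk' hl'

lemma exists_zpow_mul_mem {x : ℝ} (hx : x ≠ 0) : ∃ k : ℤ, (2:ℝ) ^ k * x ∈ W := by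
  obtain ⟨k, w, hw, rfl⟩ := mem_iUnion.1 (hD.1.symm ▸ mem_compl_singleton_iff.2 hx)
  refine ⟨-k, ?_⟩
  rwa [zpow_neg, inv_mul_cancel_left₀ (zpow_ne_zero k two_ne_zero)]

lemma bijOn_delta : BijOn delta W E := by
  refine ⟨fun w hw => delta_mem_E (ne_of_mem_of_not_mem hw hD.zero_notMem),
    fun w₁ hw₁ w₂ hw₂ heq => ?_, fun y hy => ?_⟩
  · obtain ⟨k₁, hk₁⟩ := exists_delta_eq_zpow_mul w₁
    obtain ⟨k₂, hk₂⟩ := exists_delta_eq_zpow_mul w₂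
    have hw : w₁ = (2:ℝ) ^ (k₂ - k₁) * w₂ := by
      refine mul_left_cancel₀ (zpow_ne_zero k₁ two_ne_zero) ?_
      rw [← mul_assoc, ← zpow_add₀ two_ne_zero, add_sub_cancel, ← hk₁, ← hk₂, heq]
    have h0 : k₂ - k₁ = 0 := hD.eq_of_zpow_mul_mem (hw ▸ hw₁) (by rwa [zpow_zero, one_mul])
    rw [hw, h0, zpow_zero, one_mul]
  · obtain ⟨k, hk⟩ := hD.exists_zpow_mul_mem (ne_zero_of_mem_E hy)
    exact ⟨_, hk, by rw [delta_zpow_mul (ne_zero_of_mem_E hy), delta_eq_self hy]⟩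

end DilPartition

lemma bijOn_hIso {W : Set ℝ} (hT : TransPartition W) (hD : DilPartition W) :
    BijOn (hIso W) (Ico 0 1) (Ico 0 1) :=
  bijOn_xiMap.comp (hT.bijOn_tau.comp
    ((hD.bijOn_delta.symm hD.bijOn_delta.invOn_invFunOn.symm).comp bijOn_xiInv))

lemma hIso_eq_fract {W : Set ℝ} (hD : DilPartition W) {t w : ℝ} (hw : w ∈ W)
    (hdw : delta w = xiInv t) : hIso W t = Int.fract (w / (2 * π)) := by
  rw [hIso, ← hdw, hD.bijOn_delta.injOn.leftInvOn_invFunOn hw, xiMap_tau]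

/-- For `t ∈ [0,1)`: the `t` with `(δ|_W)⁻¹ (ξ⁻¹ t) = 2^k ξ⁻¹ t`. -/
def dilationLevel (W : Set ℝ) (k : ℤ) : Set ℝ := {t | (2:ℝ) ^ k * xiInv t ∈ W}

lemma measurableSet_dilationLevel {W : Set ℝ} (hW : MeasurableSet W) (k : ℤ) :
    MeasurableSet (dilationLevel W k) :=
  (measurable_xiInv.const_mul _) hW

lemma iUnion_dilationLevel {W : Set ℝ} (hD : DilPartition W) : ⋃ k, dilationLevel W k = univ :=
  eq_univ_of_forall fun t => mem_iUnion.2 (hD.exists_zpow_mul_mem (xiInv_ne_zero t))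

lemma pairwise_disjoint_dilationLevel {W : Set ℝ} (hD : DilPartition W) :
    Pairwise (Function.onFun Disjoint (dilationLevel W)) :=
  fun _ _ hkl => disjoint_left.2 fun _ hk hl => hkl (hD.eq_of_zpow_mul_mem hk hl)

lemma hIso_eq_of_mem_dilationLevel {W : Set ℝ} (hD : DilPartition W) {t : ℝ} {k : ℤ}
    (ht : t ∈ Ico 0 1) (hk : t ∈ dilationLevel W k) :
    hIso W t = Int.fract ((2:ℝ) ^ k * (xiInv t / (2 * π))) := by
  have hE := mapsTo_xiInv ht
  rw [hIso_eq_fract hD hk (by rw [delta_zpow_mul (ne_zero_of_mem_E hE), delta_eq_self hE]),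
    mul_div_assoc]

lemma measurable_restrict_of_forall_mem_iUnion {α β ι : Type*} [MeasurableSpace α]
    [MeasurableSpace β] [Countable ι] {f : α → β} {s : Set α} {C : ι → Set α} {g : ι → α → β}
    (hC : ∀ i, MeasurableSet (C i)) (hg : ∀ i, Measurable (g i)) (hs : s ⊆ ⋃ i, C i)
    (hfg : ∀ i, ∀ x ∈ s, x ∈ C i → f x = g i x) : Measurable (s.domRestrict f) := by
  intro u hu
  have hpre : s.domRestrict f ⁻¹' u = (↑) ⁻¹' ⋃ i, C i ∩ g i ⁻¹' u := by
    ext ⟨x, hx⟩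
    obtain ⟨i, hi⟩ := mem_iUnion.1 (hs hx)
    simp only [mem_preimage, domRestrict_apply, mem_iUnion, mem_inter_iff]
    constructor
    · exact fun h => ⟨i, hi, by rwa [← hfg i x hx hi]⟩
    · exact fun ⟨j, hj, h⟩ => by rwa [hfg j x hx hj]
  rw [hpre]
  exact measurable_subtype_coe (.iUnion fun i => (hC i).inter (hg i hu))

lemma xiInv_div_two_pi_of_lt {t : ℝ} (ht : t < 1 / 2) : xiInv t / (2 * π) = t - 1 := by
  rw [xiInv, if_pos ht, mul_div_cancel_left₀ _ (by positivity)]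

lemma xiInv_div_two_pi_of_le {t : ℝ} (ht : 1 / 2 ≤ t) : xiInv t / (2 * π) = t := by
  rw [xiInv, if_neg ht.not_gt, mul_div_cancel_left₀ _ (by positivity)]

/-- For every regularized wavelet set `W`, the map `h̃_W` is a measurable
bijection of `[0,1)` given on measurable partitions `{A_k}` of `[1/2,1)` and `{B_k}` of
`[0,1/2)` by `frac(2^k x)` resp. `frac(2^k (x-1))`. -/
theorem hIso_isWaveletInduced (W : Set ℝ) (h : IsRegularizedWaveletSet W) :
    IsWaveletInduced (hIso W) := by
  obtain ⟨hW, hT, hD⟩ := h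
  have hIcoA : Ico (1/2 : ℝ) 1 ⊆ Ico 0 1 := Ico_subset_Ico_left (by norm_num)
  have hIcoB : Ico (0 : ℝ) (1/2) ⊆ Ico 0 1 := Ico_subset_Ico_right (by norm_num)
  have hdisj := pairwise_disjoint_dilationLevel hD
  refine ⟨bijOn_hIso hT hD,
    measurable_restrict_of_forall_mem_iUnion (measurableSet_dilationLevel hW)
      (fun k => ((measurable_xiInv.div_const _).const_mul _).fract)
      (by rw [iUnion_dilationLevel hD]; exact subset_univ _)
      (fun k t ht hk => hIso_eq_of_mem_dilationLevel hD ht hk),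
    fun k => Ico (1/2) 1 ∩ dilationLevel W k, fun k => Ico 0 (1/2) ∩ dilationLevel W k,
    fun k => measurableSet_Ico.inter (measurableSet_dilationLevel hW k),
    fun k => measurableSet_Ico.inter (measurableSet_dilationLevel hW k),
    by rw [← inter_iUnion, iUnion_dilationLevel hD, inter_univ],
    fun k l hkl => (hdisj hkl).mono inter_subset_right inter_subset_right,
    by rw [← inter_iUnion, iUnion_dilationLevel hD, inter_univ],
    fun k l hkl => (hdisj hkl).mono inter_subset_right inter_subset_right, ?_, ?_⟩
  · rintro k t ⟨ht, hk⟩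
    rw [hIso_eq_of_mem_dilationLevel hD (hIcoA ht) hk, xiInv_div_two_pi_of_le ht.1]
  · rintro k t ⟨ht, hk⟩
    rw [hIso_eq_of_mem_dilationLevel hD (hIcoB ht) hk, xiInv_div_two_pi_of_lt ht.2]

end
end

section
/- For every map g in the class WI₂ and every Lebesgue measurable subset σ of [0,1), one has μ(g(σ)) ≤ μ(σ), where μ denotes Lebesgue measure. -/
open MeasureTheory Set Real Filter
open scoped symmDiff Classical

noncomputable section

open scoped Pointwise in
lemma affine_image_vol_le' (k l : ℕ) (s : Set ℝ) :
    volume ((fun x : ℝ => (x + l) / 2 ^ k) '' s) ≤ volume s := by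
  have h1 : (fun x : ℝ => (x + l) / 2 ^ k) '' s
      = ((2:ℝ) ^ k)⁻¹ • ((fun x : ℝ => x + (l:ℝ)) '' s) := by
    rw [← image_smul, image_image]
    ext x
    simp [div_eq_inv_mul, smul_eq_mul]
  rw [h1, Measure.addHaar_smul, image_add_right, measure_preimage_add_right]
  simp only [Module.finrank_self, pow_one]
  calc ENNReal.ofReal |((2:ℝ)^k)⁻¹| * volume s ≤ 1 * volume s := by
        gcongr
        rw [abs_inv, abs_of_pos (by positivity)]
        refine ENNReal.ofReal_le_one.mpr ?_
        rw [inv_le_one_iff₀]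
        right; exact one_le_pow₀ one_le_two
    _ = volume s := one_mul _

/-- Every `g ∈ WI₂` contracts Lebesgue measure:
`μ(g(σ)) ≤ μ(σ)` for every measurable `σ ⊆ [0,1)`. -/
theorem memWI2_measure_image_le (g : ℝ → ℝ) (hg : MemWI2 g)
    (σ : Set ℝ) (hσ : σ ⊆ Ico (0:ℝ) 1) (hσm : MeasurableSet σ) :
    volume (g '' σ) ≤ volume σ := by
  obtain ⟨hmeas, -, -, hform⟩ := hg
  set e : ℕ → ℕ × ℕ := fun n => Nat.pairEquiv.symm n with he
  set T : ℕ → Set ℝ := fun n =>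
    σ ∩ Subtype.val '' {y : Ico (0:ℝ) 1 |
      (Ico (0:ℝ) 1).restrict g y = ((y:ℝ) + ((e n).2:ℝ)) / 2 ^ (e n).1} with hT
  have hTm : ∀ n, MeasurableSet (T n) := by
    intro n
    refine hσm.inter (measurableSet_Ico.subtype_image ?_)
    exact measurableSet_eq_fun hmeas
      ((measurable_subtype_coe.add_const _).div_const _)
  have hcover : ⋃ n, T n = σ := by
    apply Subset.antisymm
    · exact iUnion_subset fun n => inter_subset_left
    · intro x hx
      obtain ⟨k, l, hkl⟩ := hform x (hσ hx)
      refine mem_iUnion.2 ⟨Nat.pairEquiv (k, l), hx, ⟨⟨x, hσ hx⟩, ?_, rfl⟩⟩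
      simp only [mem_setOf_eq, Set.restrict_apply, he, Equiv.symm_apply_apply]
      exact hkl
  have key : ∀ n, volume (g '' disjointed T n) ≤ volume (disjointed T n) := by
    intro n
    have hsub : g '' disjointed T n
        ⊆ (fun x : ℝ => (x + ((e n).2:ℕ)) / 2 ^ (e n).1) '' disjointed T n := by
      rintro - ⟨x, hx, rfl⟩
      have hx' : x ∈ T n := disjointed_subset T n hx
      obtain ⟨-, ⟨y, hy, rfl⟩⟩ := hx'
      exact ⟨y, hx, hy.symm⟩
    exact le_trans (measure_mono hsub) (affine_image_vol_le' _ _ _)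
  calc volume (g '' σ)
      = volume (⋃ n, g '' disjointed T n) := by
        rw [← image_iUnion, iUnion_disjointed, hcover]
    _ ≤ ∑' n, volume (g '' disjointed T n) := measure_iUnion_le _
    _ ≤ ∑' n, volume (disjointed T n) := ENNReal.tsum_le_tsum key
    _ = volume (⋃ n, disjointed T n) :=
        (measure_iUnion (disjoint_disjointed T) (MeasurableSet.disjointed hTm)).symm
    _ = volume σ := by rw [iUnion_disjointed, hcover]

end
end

section
/- For every u ∈ WI₁ and every v ∈ WI₂, the map u⋄v obtained from the Schröder–Cantor–Bernstein construction is a wavelet induced map, i.e., a measurable bijection of [0,1) admitting a measurable partition {A_k}_{k∈ℤ} of [1/2,1) and a measurable partition {B_k}_{k∈ℤ} of [0,1/2) on which it equals frac(2^k x) and frac(2^k(x−1)) respectively. -/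
open MeasureTheory Set Real Filter
open scoped symmDiff Classical

noncomputable section

/-! On the Schröder–Cantor–Bernstein set `S = ⋃ₖ (v ∘ u)ᵏ (I \ v I)` the map `u ⋄ v` is `u`,
which on the `k`-th piece of its `WI₁`-partition is `x ↦ frac (2^(-k-1) x)` on `[1/2, 1)` and
`x ↦ frac (2^(-k-1) (x - 1))` on `[0, 1/2)`. Off `S` it is `v⁻¹`, and `v y = (y + l) / 2^k` gives
`v⁻¹ x = frac (2^k x) = frac (2^k (x - 1))`. By the Lusin–Souslin theorem all these pieces are
Borel, so `u ⋄ v` has the required form on countably many Borel pieces, and disjointifying them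
along an enumeration of `ℤ` gives the two partitions. -/

local notation "𝕀" => Ico (0 : ℝ) 1

section Measurability

variable {α β : Type*} [MeasurableSpace α] [MeasurableSpace β]

theorem measurable_domRestrict_of_cover {ι : Type*} [Countable ι] {s : Set α} {f : α → β}
    (P : ι → Set α) (F : ι → α → β) (hP : ∀ i, MeasurableSet (P i)) (hF : ∀ i, Measurable (F i))
    (hcov : s ⊆ ⋃ i, P i) (hf : ∀ i, ∀ x ∈ P i, f x = F i x) :
    Measurable (s.domRestrict f) := by
  intro t ht
  have : s.domRestrict f ⁻¹' t = ⋃ i, Subtype.val ⁻¹' P i ∩ (F i ∘ Subtype.val) ⁻¹' t := by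
    ext x
    obtain ⟨i, hi⟩ := mem_iUnion.1 (hcov x.2)
    simp only [mem_preimage, domRestrict_apply, mem_iUnion, mem_inter_iff, Function.comp_apply]
    exact ⟨fun hx => ⟨i, hi, by rwa [← hf i x hi]⟩, fun ⟨j, hj, hx⟩ => by rwa [hf j x hj]⟩
  rw [this]
  exact .iUnion fun i => (measurable_subtype_coe (hP i)).inter
    ((hF i).comp measurable_subtype_coe ht)

theorem measurableSet_sep_eq_of_measurable_domRestrict [MeasurableEq β] {s : Set α} {f g : α → β}
    (hs : MeasurableSet s) (hf : Measurable (s.domRestrict f)) (hg : Measurable g) :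
    MeasurableSet {x ∈ s | f x = g x} := by
  have : {x ∈ s | f x = g x} = Subtype.val '' {x : s | s.domRestrict f x = g x} := by
    ext x
    simp [domRestrict_apply, and_comm]
  rw [this]
  exact hs.subtype_image (measurableSet_eq_fun hf (hg.comp measurable_subtype_coe))

theorem MeasurableSet.image_of_measurable_domRestrict_injOn [StandardBorelSpace α]
    [MeasurableSpace.CountablySeparated β] {s t : Set α} {f : α → β} (hs : MeasurableSet s)
    (hf : Measurable (s.domRestrict f)) (hinj : InjOn f s) (ht : MeasurableSet t) (hts : t ⊆ s) :
    MeasurableSet (f '' t) := by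
  have := hs.standardBorel
  have : f '' t = s.domRestrict f '' (Subtype.val ⁻¹' t) := by
    rw [domRestrict_eq, image_comp, Subtype.image_preimage_coe, inter_eq_self_of_subset_right hts]
  rw [this]
  exact (measurable_subtype_coe ht).image_of_measurable_injOn hf
    (injOn_iff_injective.1 hinj).injOn

theorem exists_measurable_disjoint_subsets_iUnion_eq {ι : Type*} [Denumerable ι]
    {G : ι → Set α} (hG : ∀ i, MeasurableSet (G i)) :
    ∃ D : ι → Set α, (∀ i, MeasurableSet (D i)) ∧ (∀ i, D i ⊆ G i) ∧
      Pairwise (Function.onFun Disjoint D) ∧ ⋃ i, D i = ⋃ i, G i := by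
  let e := Denumerable.eqv ι
  refine ⟨fun i => disjointed (G ∘ e.symm) (e i), fun i => .disjointed (fun n => hG _) _,
    fun i => (disjointed_subset _ _).trans (by simp), ?_, ?_⟩
  · exact (disjoint_disjointed _).comp_of_injective e.injective
  · rw [e.surjective.iUnion_comp (disjointed (G ∘ e.symm)), iUnion_disjointed]
    exact e.symm.surjective.iUnion_comp G

end Measurability

def dyadicFract (k : ℤ) (x : ℝ) : ℝ :=
  if x < 1 / 2 then Int.fract ((2 : ℝ) ^ k * (x - 1)) else Int.fract ((2 : ℝ) ^ k * x)

theorem measurable_dyadicFract (k : ℤ) : Measurable (dyadicFract k) :=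
  Measurable.ite measurableSet_Iio (by fun_prop) (by fun_prop)

theorem dyadicFract_mem_Ico (k : ℤ) (x : ℝ) : dyadicFract k x ∈ 𝕀 := by
  unfold dyadicFract
  split_ifs <;> exact ⟨Int.fract_nonneg _, Int.fract_lt_one _⟩

theorem dyadicFract_natCast (k : ℕ) (x : ℝ) : dyadicFract k x = Int.fract ((2 : ℝ) ^ k * x) := by
  have : (2 : ℝ) ^ (k : ℤ) * (x - 1) = 2 ^ k * x - ((2 ^ k : ℕ) : ℝ) := by
    rw [zpow_natCast]; push_cast; ring
  unfold dyadicFract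
  split_ifs
  · rw [this, Int.fract_sub_natCast]
  · rw [zpow_natCast]

theorem dyadicFract_natCast_add_div {x : ℝ} (hx : x ∈ 𝕀) (k l : ℕ) :
    dyadicFract k ((x + l) / 2 ^ k) = x := by
  rw [dyadicFract_natCast, mul_div_cancel₀ _ (by positivity), Int.fract_add_natCast,
    Int.fract_eq_self.2 hx]

theorem dyadicFract_neg_of_mem_Ico_half_one {x : ℝ} (hx : x ∈ Ico (1 / 2 : ℝ) 1) (k : ℕ) :
    dyadicFract (-((k + 1 : ℕ) : ℤ)) x = x / 2 ^ (k + 1) := by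
  have h2 : (1 : ℝ) ≤ 2 ^ (k + 1) := one_le_pow₀ (by norm_num)
  rw [dyadicFract, if_neg (not_lt.2 hx.1), zpow_neg, zpow_natCast, inv_mul_eq_div,
    Int.fract_eq_self]
  exact ⟨div_nonneg (by linarith [hx.1]) (by positivity),
    (div_lt_one (by positivity)).2 (by linarith [hx.2])⟩

theorem dyadicFract_neg_of_mem_Ico_zero_half {x : ℝ} (hx : x ∈ Ico (0 : ℝ) (1 / 2)) (k : ℕ) :
    dyadicFract (-((k + 1 : ℕ) : ℤ)) x = (x - 1) / 2 ^ (k + 1) + 1 := by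
  have h2 : (1 : ℝ) ≤ 2 ^ (k + 1) := one_le_pow₀ (by norm_num)
  rw [dyadicFract, if_pos hx.2, zpow_neg, zpow_natCast, inv_mul_eq_div, Int.fract_eq_iff]
  refine ⟨?_, ?_, -1, by push_cast; ring⟩
  · have : -1 ≤ (x - 1) / 2 ^ (k + 1) := by
      rw [le_div_iff₀ (by positivity)]
      linarith [hx.1]
    linarith
  · have : (x - 1) / 2 ^ (k + 1) < 0 := div_neg_of_neg_of_pos (by linarith [hx.2]) (by positivity)
    linarith

theorem eq_of_div_two_pow_eq {a b : ℝ} {m n : ℕ} (h : a / 2 ^ m = b / 2 ^ n) (hab : a < 2 * b)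
    (hba : b < 2 * a) : a = b := by
  wlog hmn : m ≤ n generalizing a b m n
  · exact (this h.symm hba hab (le_of_not_ge hmn)).symm
  obtain ⟨d, rfl⟩ := Nat.exists_eq_add_of_le hmn
  have hb : b = a * 2 ^ d := by
    rw [pow_add, eq_div_iff (by positivity)] at h
    rw [← h]
    field_simp
  rcases d with _ | d
  · simpa using hb.symm
  · have : (2 : ℝ) ≤ 2 ^ (d + 1) := le_self_pow₀ (by norm_num) (by omega)
    nlinarith

theorem isWaveletInduced_of_exists_dyadicFract {h : ℝ → ℝ} (hbij : BijOn h 𝕀 𝕀)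
    (hm : Measurable (Set.domRestrict 𝕀 h)) (hk : ∀ x ∈ 𝕀, ∃ k : ℤ, h x = dyadicFract k x) :
    IsWaveletInduced h := by
  obtain ⟨D, hDm, hDG, hDd, hDU⟩ := exists_measurable_disjoint_subsets_iUnion_eq
    (G := fun k : ℤ => {x ∈ 𝕀 | h x = dyadicFract k x})
    fun k => measurableSet_sep_eq_of_measurable_domRestrict measurableSet_Ico hm
      (measurable_dyadicFract k)
  have hD : ⋃ k, D k = 𝕀 := by
    rw [hDU]
    exact Subset.antisymm (iUnion_subset fun k => sep_subset _ _)
      fun x hx => mem_iUnion.2 ((hk x hx).imp fun k hxk => ⟨hx, hxk⟩)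
  refine ⟨hbij, hm, fun k => D k ∩ Ici (1 / 2), fun k => D k ∩ Iio (1 / 2),
    fun k => (hDm k).inter measurableSet_Ici, fun k => (hDm k).inter measurableSet_Iio, ?_,
    hDd.mono fun _ _ hd => hd.mono inter_subset_left inter_subset_left, ?_,
    hDd.mono fun _ _ hd => hd.mono inter_subset_left inter_subset_left, ?_, ?_⟩
  · rw [← iUnion_inter, hD, Ico_inter_Ici, max_eq_right (by norm_num)]
  · rw [← iUnion_inter, hD, Ico_inter_Iio, min_eq_right (by norm_num)]
  · intro k x ⟨hxD, hx⟩
    rw [(hDG k hxD).2, dyadicFract, if_neg (not_lt.2 hx)]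
  · intro k x ⟨hxD, hx⟩
    rw [(hDG k hxD).2, dyadicFract, if_pos (show x < 1 / 2 from hx)]

def IsPiecewiseDyadic (h : ℝ → ℝ) (s : Set ℝ) : Prop :=
  ∃ (ι : Type) (_ : Countable ι) (P : ι → Set ℝ) (κ : ι → ℤ), (∀ i, MeasurableSet (P i)) ∧
    s ⊆ ⋃ i, P i ∧ ∀ i, ∀ x ∈ P i, h x = dyadicFract (κ i) x

namespace IsPiecewiseDyadic

variable {f g h : ℝ → ℝ} {s t S : Set ℝ}

theorem mono (hh : IsPiecewiseDyadic h s) (hts : t ⊆ s) : IsPiecewiseDyadic h t := by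
  obtain ⟨ι, _, P, κ, hP, hcov, hPh⟩ := hh
  exact ⟨ι, inferInstance, P, κ, hP, hts.trans hcov, hPh⟩

theorem exists_dyadicFract (hh : IsPiecewiseDyadic h s) :
    ∀ x ∈ s, ∃ k : ℤ, h x = dyadicFract k x := by
  obtain ⟨ι, _, P, κ, -, hcov, hPh⟩ := hh
  intro x hx
  obtain ⟨i, hi⟩ := mem_iUnion.1 (hcov hx)
  exact ⟨κ i, hPh i x hi⟩

theorem mapsTo (hh : IsPiecewiseDyadic h s) : MapsTo h s 𝕀 := fun x hx => by
  obtain ⟨k, hk⟩ := hh.exists_dyadicFract x hx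
  exact hk ▸ dyadicFract_mem_Ico k x

theorem measurable_domRestrict (hh : IsPiecewiseDyadic h s) : Measurable (s.domRestrict h) := by
  obtain ⟨ι, _, P, κ, hP, hcov, hPh⟩ := hh
  exact measurable_domRestrict_of_cover P (fun i => dyadicFract (κ i)) hP
    (fun i => measurable_dyadicFract (κ i)) hcov hPh

theorem piecewise (hf : IsPiecewiseDyadic f (s ∩ S)) (hg : IsPiecewiseDyadic g (s \ S))
    (hS : MeasurableSet S) : IsPiecewiseDyadic (S.piecewise f g) s := by
  obtain ⟨ι, _, P, κ, hP, hPcov, hPf⟩ := hf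
  obtain ⟨ι', _, Q, κ', hQ, hQcov, hQg⟩ := hg
  refine ⟨ι ⊕ ι', inferInstance, Sum.elim (fun i => P i ∩ S) (fun j => Q j \ S),
    Sum.elim κ κ', ?_, fun x hx => ?_, ?_⟩
  · rintro (i | j)
    exacts [(hP i).inter hS, (hQ j).diff hS]
  · by_cases hxS : x ∈ S
    · obtain ⟨i, hi⟩ := mem_iUnion.1 (hPcov ⟨hx, hxS⟩)
      exact mem_iUnion.2 ⟨.inl i, hi, hxS⟩
    · obtain ⟨j, hj⟩ := mem_iUnion.1 (hQcov ⟨hx, hxS⟩)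
      exact mem_iUnion.2 ⟨.inr j, hj, hxS⟩
  · rintro (i | j) x ⟨hx, hxS⟩
    · rw [piecewise_eq_of_mem _ _ _ hxS, hPf i x hx, Sum.elim_inl]
    · rw [piecewise_eq_of_notMem _ _ _ hxS, hQg j x hx, Sum.elim_inr]

end IsPiecewiseDyadic

theorem MemWI1.isPiecewiseDyadic {u : ℝ → ℝ} (hu : MemWI1 u) : IsPiecewiseDyadic u 𝕀 := by
  obtain ⟨A, B, hAm, hBm, hAU, -, hBU, -, hA, hB⟩ := hu
  have hcov : ⋃ k, (A k ∪ B k) = 𝕀 := by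
    rw [iUnion_union_distrib, hAU, hBU, union_comm, Ico_union_Ico_eq_Ico] <;> norm_num
  refine ⟨ℕ, inferInstance, fun k => A k ∪ B k, fun k => -((k + 1 : ℕ) : ℤ),
    fun k => (hAm k).union (hBm k), hcov.symm.subset, ?_⟩
  rintro k x (hx | hx)
  · rw [hA k x hx, dyadicFract_neg_of_mem_Ico_half_one (hAU ▸ mem_iUnion_of_mem k hx)]
  · rw [hB k x hx, dyadicFract_neg_of_mem_Ico_zero_half (hBU ▸ mem_iUnion_of_mem k hx)]

theorem MemWI1.injOn {u : ℝ → ℝ} (hu : MemWI1 u) : InjOn u 𝕀 := by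
  obtain ⟨A, B, -, -, hAU, -, hBU, -, hA, hB⟩ := hu
  have hA' : ∀ k, ∀ x ∈ A k, x ∈ Ico (1 / 2 : ℝ) 1 ∧ u x < 1 / 2 := fun k x hx => by
    have hx' : x ∈ Ico (1 / 2 : ℝ) 1 := hAU ▸ mem_iUnion_of_mem k hx
    refine ⟨hx', ?_⟩
    rw [hA k x hx, div_lt_iff₀ (by positivity)]
    have : (2 : ℝ) ≤ 2 ^ (k + 1) := le_self_pow₀ (by norm_num) (by omega)
    nlinarith [hx'.2]
  have hB' : ∀ k, ∀ x ∈ B k, x ∈ Ico (0 : ℝ) (1 / 2) ∧ 1 / 2 ≤ u x := fun k x hx => by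
    have hx' : x ∈ Ico (0 : ℝ) (1 / 2) := hBU ▸ mem_iUnion_of_mem k hx
    refine ⟨hx', ?_⟩
    have : -(1 / 2) ≤ (x - 1) / 2 ^ (k + 1) := by
      rw [le_div_iff₀ (by positivity)]
      have : (2 : ℝ) ≤ 2 ^ (k + 1) := le_self_pow₀ (by norm_num) (by omega)
      nlinarith [hx'.1]
    rw [hB k x hx]
    linarith
  have hcov : ∀ x ∈ 𝕀, (∃ k, x ∈ A k) ∨ ∃ k, x ∈ B k := fun x hx => by
    rcases lt_or_ge x (1 / 2) with h | h
    · exact .inr (mem_iUnion.1 (hBU ▸ ⟨hx.1, h⟩))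
    · exact .inl (mem_iUnion.1 (hAU ▸ ⟨h, hx.2⟩))
  intro x hx y hy hxy
  rcases hcov x hx with ⟨k, hk⟩ | ⟨k, hk⟩ <;> rcases hcov y hy with ⟨j, hj⟩ | ⟨j, hj⟩
  · obtain ⟨⟨hx₁, hx₂⟩, -⟩ := hA' k x hk
    obtain ⟨⟨hy₁, hy₂⟩, -⟩ := hA' j y hj
    rw [hA k x hk, hA j y hj] at hxy
    exact eq_of_div_two_pow_eq hxy (by linarith) (by linarith)
  · linarith [(hA' k x hk).2, (hB' j y hj).2]
  · linarith [(hB' k x hk).2, (hA' j y hj).2]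
  · obtain ⟨⟨hx₁, hx₂⟩, -⟩ := hB' k x hk
    obtain ⟨⟨hy₁, hy₂⟩, -⟩ := hB' j y hj
    rw [hB k x hk, hB j y hj, add_left_inj, ← neg_sub 1 x, ← neg_sub 1 y, neg_div, neg_div,
      neg_inj] at hxy
    linarith [eq_of_div_two_pow_eq hxy (by linarith) (by linarith)]

theorem MemWI2.isPiecewiseDyadic_invFunOn {v : ℝ → ℝ} (hv : MemWI2 v) :
    IsPiecewiseDyadic (Function.invFunOn v 𝕀) (v '' 𝕀) := by
  obtain ⟨hvm, -, hvinj, hvform⟩ := hv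
  refine ⟨ℕ × ℕ, inferInstance, fun p => v '' {x ∈ 𝕀 | v x = (x + p.2) / 2 ^ p.1},
    fun p => p.1, fun p => ?_, ?_, ?_⟩
  · exact measurableSet_Ico.image_of_measurable_domRestrict_injOn hvm hvinj
      (measurableSet_sep_eq_of_measurable_domRestrict measurableSet_Ico hvm (by fun_prop))
      (sep_subset _ _)
  · rintro _ ⟨x, hx, rfl⟩
    obtain ⟨k, l, hkl⟩ := hvform x hx
    exact mem_iUnion.2 ⟨(k, l), x, ⟨hx, hkl⟩, rfl⟩
  · rintro p _ ⟨x, ⟨hx, hxp⟩, rfl⟩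
    rw [hvinj.leftInvOn_invFunOn hx, hxp, dyadicFract_natCast_add_div hx]

section SchroederBernstein

variable {u v : ℝ → ℝ}

def scbSet (u v : ℝ → ℝ) : Set ℝ := ⋃ k : ℕ, (v ∘ u)^[k] '' (𝕀 \ v '' 𝕀)

theorem scbOn_eq_piecewise : scbOn u v = (scbSet u v).piecewise u (Function.invFunOn v 𝕀) :=
  rfl

theorem scbOn_of_mem {x : ℝ} (hx : x ∈ scbSet u v) : scbOn u v x = u x :=
  piecewise_eq_of_mem _ _ _ hx

theorem scbOn_of_notMem {x : ℝ} (hx : x ∉ scbSet u v) :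
    scbOn u v x = Function.invFunOn v 𝕀 x :=
  piecewise_eq_of_notMem _ _ _ hx

theorem scbSet_subset (hu : MapsTo u 𝕀 𝕀) (hv : MapsTo v 𝕀 𝕀) : scbSet u v ⊆ 𝕀 :=
  iUnion_subset fun k => (image_mono sdiff_subset).trans ((hv.comp hu).iterate k).image_subset

theorem diff_scbSet_subset_image : 𝕀 \ scbSet u v ⊆ v '' 𝕀 := fun x ⟨hx, hxS⟩ => by
  by_contra h
  exact hxS (mem_iUnion.2 ⟨0, x, ⟨hx, h⟩, rfl⟩)

theorem comp_mem_scbSet {x : ℝ} (hx : x ∈ scbSet u v) : v (u x) ∈ scbSet u v := by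
  obtain ⟨k, hk⟩ := mem_iUnion.1 hx
  refine mem_iUnion.2 ⟨k + 1, ?_⟩
  rw [Function.iterate_succ', image_comp]
  exact mem_image_of_mem _ hk

theorem exists_mem_scbSet_of_mem_scbSet (hu : MapsTo u 𝕀 𝕀) (hv : MapsTo v 𝕀 𝕀)
    (hv' : InjOn v 𝕀) {y : ℝ} (hy : y ∈ 𝕀) (hyS : v y ∈ scbSet u v) :
    ∃ w ∈ scbSet u v, u w = y := by
  obtain ⟨_ | k, hk⟩ := mem_iUnion.1 hyS
  · rw [Function.iterate_zero, image_id] at hk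
    exact absurd (mem_image_of_mem v hy) hk.2
  · rw [Function.iterate_succ', image_comp] at hk
    obtain ⟨w, hw, hwy⟩ := hk
    have hwS : w ∈ scbSet u v := mem_iUnion_of_mem k hw
    exact ⟨w, hwS, hv' (hu (scbSet_subset hu hv hwS)) hy hwy⟩

theorem scbOn_bijOn (hu : MapsTo u 𝕀 𝕀) (hu' : InjOn u 𝕀) (hv : MapsTo v 𝕀 𝕀)
    (hv' : InjOn v 𝕀) : BijOn (scbOn u v) 𝕀 𝕀 := by
  have hinv : ∀ x ∈ 𝕀, x ∉ scbSet u v → v (scbOn u v x) = x := fun x hx hxS => by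
    rw [scbOn_of_notMem hxS]
    exact Function.invFunOn_eq (diff_scbSet_subset_image ⟨hx, hxS⟩)
  refine ⟨fun x hx => ?_, fun x hx y hy hxy => ?_, fun y hy => ?_⟩
  · by_cases hxS : x ∈ scbSet u v
    · exact scbOn_of_mem hxS ▸ hu hx
    · exact scbOn_of_notMem hxS ▸ Function.invFunOn_mem (diff_scbSet_subset_image ⟨hx, hxS⟩)
  · by_cases hxS : x ∈ scbSet u v <;> by_cases hyS : y ∈ scbSet u v
    · rw [scbOn_of_mem hxS, scbOn_of_mem hyS] at hxy
      exact hu' hx hy hxy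
    · refine absurd ?_ hyS
      rw [← hinv y hy hyS, ← hxy, scbOn_of_mem hxS]
      exact comp_mem_scbSet hxS
    · refine absurd ?_ hxS
      rw [← hinv x hx hxS, hxy, scbOn_of_mem hyS]
      exact comp_mem_scbSet hyS
    · rw [← hinv x hx hxS, ← hinv y hy hyS, hxy]
  · by_cases hyS : v y ∈ scbSet u v
    · obtain ⟨w, hwS, rfl⟩ := exists_mem_scbSet_of_mem_scbSet hu hv hv' hy hyS
      exact ⟨w, scbSet_subset hu hv hwS, scbOn_of_mem hwS⟩
    · exact ⟨v y, hv hy, by rw [scbOn_of_notMem hyS, hv'.leftInvOn_invFunOn hy]⟩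

theorem measurableSet_scbSet (hum : Measurable (Set.domRestrict 𝕀 u)) (hu : MapsTo u 𝕀 𝕀)
    (hu' : InjOn u 𝕀) (hvm : Measurable (Set.domRestrict 𝕀 v)) (hv : MapsTo v 𝕀 𝕀)
    (hv' : InjOn v 𝕀) : MeasurableSet (scbSet u v) := by
  have hvum : Measurable (Set.domRestrict 𝕀 (v ∘ u)) :=
    hvm.comp (hum.subtype_mk (h := fun x => hu x.2))
  have hiter : ∀ k, MeasurableSet ((v ∘ u)^[k] '' (𝕀 \ v '' 𝕀)) := by
    intro k
    induction k with
    | zero =>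
      simpa using measurableSet_Ico.diff
        (measurableSet_Ico.image_of_measurable_domRestrict_injOn hvm hv' measurableSet_Ico le_rfl)
    | succ k ih =>
      rw [Function.iterate_succ', image_comp]
      exact measurableSet_Ico.image_of_measurable_domRestrict_injOn hvum (hv'.comp hu' hu) ih
        ((image_mono sdiff_subset).trans ((hv.comp hu).iterate k).image_subset)
  exact .iUnion hiter

end SchroederBernstein

/-- For every `u ∈ WI₁` and `v ∈ WI₂`, the Schröder–Cantor–Bernstein map
`u ⋄ v` is a wavelet induced map. -/
theorem scb_isWaveletInduced (u v : ℝ → ℝ) (hu : MemWI1 u) (hv : MemWI2 v) :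
    IsWaveletInduced (scbOn u v) := by
  have hu₁ := hu.isPiecewiseDyadic
  have hv₁ := hv.isPiecewiseDyadic_invFunOn
  obtain ⟨hvm, hvI, hvinj, -⟩ := hv
  have hS := measurableSet_scbSet hu₁.measurable_domRestrict hu₁.mapsTo hu.injOn hvm hvI hvinj
  have h : IsPiecewiseDyadic (scbOn u v) 𝕀 := by
    rw [scbOn_eq_piecewise]
    exact (hu₁.mono inter_subset_left).piecewise (hv₁.mono diff_scbSet_subset_image) hS
  exact isWaveletInduced_of_exists_dyadicFract (scbOn_bijOn hu₁.mapsTo hu.injOn hvI hvinj)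
    h.measurable_domRestrict h.exists_dyadicFract

end
end

section
/- Let S ⊆ [0,1) be a Lebesgue measurable set and let v₀ : S → [0,1) be a measurable injective map such that for every x ∈ S there exist integers k, l ≥ 0 with v₀(x) = (x + l)/2^k. Then there exist a measurable set S' with S ⊆ S' ⊆ [0,1) and μ([0,1) \ S') = 0, and a measurable injective map ṽ : S' → [0,1) extending v₀ such that for every x ∈ S' there exist integers k, l ≥ 0 with ṽ(x) = (x + l)/2^k. -/
open MeasureTheory Set Real Filter
open scoped symmDiff Classical

noncomputable section

/-!
A partial `WI₂` map is piecewise one of the contractions `x ↦ (x + l) / 2^k`, so its image is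
no larger than its domain `S`; hence the free part `U` of the target is at least as large as the
uncovered part `T = [0,1) \ S`. At a density point of `U` some dyadic interval
`[l / 2^k, (l + 1) / 2^k)` lies in `U` up to a set of relative measure `μ T / 2`, so the
contraction onto that interval sends all of `T` but a set of measure `μ T / 2` into `U`.
Adding this piece halves `μ T`; iterating and taking the union of the increasing sequence of
extensions leaves a null set.
-/

open scoped ENNReal Topology

lemma measurable_domRestrict_iff {α β : Type*} [MeasurableSpace α] [MeasurableSpace β]
    {s : Set α} (hs : MeasurableSet s) {f : α → β} :
    Measurable (s.domRestrict f) ↔ ∀ t, MeasurableSet t → MeasurableSet (s ∩ f ⁻¹' t) := by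
  refine ⟨fun hf t ht => ?_, fun hf t ht => ?_⟩
  · rw [← Subtype.image_preimage_coe]
    exact hs.subtype_image (hf ht)
  · have h : s.domRestrict f ⁻¹' t = Subtype.val ⁻¹' (s ∩ f ⁻¹' t) := by
      ext; simp
    exact h ▸ measurable_subtype_coe (hf t ht)

/-- Maps `[0,1)` onto the dyadic interval `[l / 2^k, (l + 1) / 2^k)`. -/
def dyadicMap (k l : ℕ) (x : ℝ) : ℝ := (x + l) / 2 ^ k

namespace dyadicMap

lemma measurableEmbedding (k l : ℕ) : MeasurableEmbedding (dyadicMap k l) := by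
  show MeasurableEmbedding fun x : ℝ => (x + l) / 2 ^ k
  have h := (measurableEmbedding_mulRight₀ (inv_ne_zero (pow_ne_zero k (two_ne_zero' ℝ)))).comp
    (measurableEmbedding_addRight (l : ℝ))
  simpa only [Function.comp_def, ← div_eq_mul_inv] using h

lemma volume_preimage (k l : ℕ) (C : Set ℝ) :
    volume (dyadicMap k l ⁻¹' C) = 2 ^ k * volume C := by
  have h : dyadicMap k l ⁻¹' C = (· + (l : ℝ)) ⁻¹' ((· * ((2 : ℝ) ^ k)⁻¹) ⁻¹' C) := by
    ext x; simp [dyadicMap, div_eq_mul_inv]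
  rw [h, measure_preimage_add_right, Real.volume_preimage_mul_right (by positivity), inv_inv,
    abs_of_pos (by positivity), ENNReal.ofReal_pow zero_le_two, ENNReal.ofReal_ofNat]

lemma volume_image_le (k l : ℕ) (A : Set ℝ) : volume (dyadicMap k l '' A) ≤ volume A :=
  calc volume (dyadicMap k l '' A) = 1 * volume (dyadicMap k l '' A) := (one_mul _).symm
    _ ≤ 2 ^ k * volume (dyadicMap k l '' A) := by gcongr; exact one_le_pow₀ one_le_two
    _ = volume A := by
      rw [← volume_preimage, (measurableEmbedding k l).injective.preimage_image]

lemma floor_mapsTo_closedBall {x : ℝ} (hx : 0 ≤ x) (k : ℕ) :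
    MapsTo (dyadicMap k ⌊x * 2 ^ k⌋₊) (Ico 0 1) (Metric.closedBall x (2 ^ k)⁻¹) := by
  have h2k : (0 : ℝ) < 2 ^ k := by positivity
  have hl := Nat.floor_le (mul_nonneg hx h2k.le)
  have hl' := Nat.lt_floor_add_one (x * 2 ^ k)
  intro y ⟨hy0, hy1⟩
  have hdist : dyadicMap k ⌊x * 2 ^ k⌋₊ y - x = (y + ⌊x * 2 ^ k⌋₊ - x * 2 ^ k) * (2 ^ k)⁻¹ := by
    unfold dyadicMap; field_simp
  rw [Metric.mem_closedBall, Real.dist_eq, hdist, abs_mul, abs_of_pos (inv_pos.2 h2k)]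
  exact mul_le_of_le_one_left (by positivity) (abs_le.2 ⟨by linarith, by linarith⟩)

end dyadicMap

/-- Lebesgue density at a point of `U`, read at dyadic scales. -/
lemma exists_volume_Ico_diff_dyadicMap_preimage_le {U : Set ℝ} (hU : MeasurableSet U)
    (hU0 : U ⊆ Ici 0) (hpos : volume U ≠ 0) {ε : ℝ≥0∞} (hε : ε ≠ 0) :
    ∃ k l : ℕ, volume (Ico 0 1 \ dyadicMap k l ⁻¹' U) ≤ ε := by
  obtain ⟨x, hxU, hx⟩ : ∃ x ∈ U, Tendsto (fun r => volume (Uᶜ ∩ Metric.closedBall x r) /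
      volume (Metric.closedBall x r)) (𝓝[>] 0) (𝓝 0) := by
    refine Measure.exists_mem_of_measure_ne_zero_of_ae hpos ?_
    filter_upwards [ae_restrict_mem hU, ae_restrict_of_ae
      (Besicovitch.ae_tendsto_measure_inter_div_of_measurableSet volume hU.compl)] with x hxU hx
    simpa [hxU] using hx
  have hr : Tendsto (fun k : ℕ => ((2 : ℝ) ^ k)⁻¹) atTop (𝓝[>] 0) :=
    tendsto_inv_atTop_nhdsGT_zero.comp (tendsto_pow_atTop_atTop_of_one_lt one_lt_two)
  obtain ⟨k, hk⟩ := ((hx.comp hr).eventually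
    (ge_mem_nhds (ENNReal.half_pos hε))).exists
  refine ⟨k, ⌊x * 2 ^ k⌋₊, ?_⟩
  have hball : volume (Metric.closedBall x ((2 : ℝ) ^ k)⁻¹) = 2 * (2 ^ k)⁻¹ := by
    rw [Real.volume_closedBall, ENNReal.ofReal_mul zero_le_two, ENNReal.ofReal_inv_of_pos
      (by positivity), ENNReal.ofReal_pow zero_le_two, ENNReal.ofReal_ofNat]
  calc volume (Ico 0 1 \ dyadicMap k ⌊x * 2 ^ k⌋₊ ⁻¹' U)
      ≤ volume (dyadicMap k ⌊x * 2 ^ k⌋₊ ⁻¹' (Uᶜ ∩ Metric.closedBall x ((2 : ℝ) ^ k)⁻¹)) :=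
        measure_mono fun y hy => ⟨hy.2, dyadicMap.floor_mapsTo_closedBall (hU0 hxU) k hy.1⟩
    _ = 2 ^ k * volume (Uᶜ ∩ Metric.closedBall x ((2 : ℝ) ^ k)⁻¹) := dyadicMap.volume_preimage _ _ _
    _ ≤ 2 ^ k * (ε / 2 * (2 * (2 ^ k)⁻¹)) := by
        rw [← hball]; gcongr
        exact (ENNReal.div_le_iff (by simp [hball]) (by simp [hball, ENNReal.mul_eq_top])).1 hk
    _ = (ε / 2 * 2) * (2 ^ k * (2 ^ k)⁻¹) := by ring
    _ = ε := by
        rw [ENNReal.div_mul_cancel two_ne_zero ENNReal.ofNat_ne_top,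
          ENNReal.mul_inv_cancel (by simp) (by simp), mul_one]

structure PartialWI2 where
  dom : Set ℝ
  toFun : ℝ → ℝ
  measurableSet_dom : MeasurableSet dom
  dom_subset : dom ⊆ Ico 0 1
  measurable_domRestrict : Measurable (dom.domRestrict toFun)
  injOn : InjOn toFun dom
  mapsTo : MapsTo toFun dom (Ico 0 1)
  exists_dyadicMap : ∀ x ∈ dom, ∃ k l : ℕ, toFun x = dyadicMap k l x

namespace PartialWI2

instance : Preorder PartialWI2 where
  le p q := p.dom ⊆ q.dom ∧ EqOn q.toFun p.toFun p.dom
  le_refl _ := ⟨subset_rfl, eqOn_refl _ _⟩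
  le_trans _ _ _ hpq hqr := ⟨hpq.1.trans hqr.1, fun _ hx => (hqr.2 (hpq.1 hx)).trans (hpq.2 hx)⟩

variable (p : PartialWI2)

def piece (n : ℕ) : Set ℝ := p.dom ∩ {x | p.toFun x = dyadicMap n.unpair.1 n.unpair.2 x}

lemma measurableSet_piece (n : ℕ) : MeasurableSet (p.piece n) := by
  have h := measurableSet_eq_fun p.measurable_domRestrict
    ((dyadicMap.measurableEmbedding n.unpair.1 n.unpair.2).measurable.comp measurable_subtype_coe)
  rw [piece, ← Subtype.image_preimage_coe]
  exact p.measurableSet_dom.subtype_image h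

lemma iUnion_piece : ⋃ n, p.piece n = p.dom := by
  refine (iUnion_subset fun n => inter_subset_left).antisymm fun x hx => ?_
  obtain ⟨k, l, h⟩ := p.exists_dyadicMap x hx
  exact mem_iUnion.2 ⟨Nat.pair k l, hx, by simpa using h⟩

lemma image_eq_iUnion :
    p.toFun '' p.dom = ⋃ n, dyadicMap n.unpair.1 n.unpair.2 '' disjointed p.piece n := by
  conv_lhs => rw [← p.iUnion_piece, ← iUnion_disjointed, image_iUnion]
  exact iUnion_congr fun n => EqOn.image_eq fun x hx => (disjointed_subset _ n hx).2

lemma measurableSet_image : MeasurableSet (p.toFun '' p.dom) := by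
  rw [image_eq_iUnion]
  exact .iUnion fun n => (dyadicMap.measurableEmbedding _ _).measurableSet_image.2
    (.disjointed p.measurableSet_piece n)

lemma volume_image_le : volume (p.toFun '' p.dom) ≤ volume p.dom :=
  calc volume (p.toFun '' p.dom)
      ≤ ∑' n, volume (dyadicMap n.unpair.1 n.unpair.2 '' disjointed p.piece n) := by
        rw [image_eq_iUnion]; exact measure_iUnion_le _
    _ ≤ ∑' n, volume (disjointed p.piece n) :=
        ENNReal.tsum_le_tsum fun n => dyadicMap.volume_image_le _ _ _
    _ = volume p.dom := by
        rw [← measure_iUnion (disjoint_disjointed _) (.disjointed p.measurableSet_piece),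
          iUnion_disjointed, iUnion_piece]

lemma volume_Ico_diff_dom_le :
    volume (Ico 0 1 \ p.dom) ≤ volume (Ico 0 1 \ p.toFun '' p.dom) := by
  rw [measure_sdiff p.dom_subset p.measurableSet_dom.nullMeasurableSet
      (measure_ne_top_of_subset p.dom_subset (by simp)),
    measure_sdiff p.mapsTo.image_subset p.measurableSet_image.nullMeasurableSet
      (measure_ne_top_of_subset p.mapsTo.image_subset (by simp))]
  exact tsub_le_tsub_left p.volume_image_le _

def ofDyadicMap (k l : ℕ) {A : Set ℝ} (hA : MeasurableSet A) (hA1 : A ⊆ Ico 0 1)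
    (hmaps : MapsTo (dyadicMap k l) A (Ico 0 1)) : PartialWI2 where
  dom := A
  toFun := dyadicMap k l
  measurableSet_dom := hA
  dom_subset := hA1
  measurable_domRestrict :=
    (dyadicMap.measurableEmbedding k l).measurable.comp measurable_subtype_coe
  injOn := (dyadicMap.measurableEmbedding k l).injective.injOn
  mapsTo := hmaps
  exists_dyadicMap _ _ := ⟨k, l, rfl⟩

section union

variable (q : PartialWI2) (hdom : Disjoint p.dom q.dom)
  (himg : Disjoint (p.toFun '' p.dom) (q.toFun '' q.dom))
include hdom

lemma eqOn_piecewise_right : EqOn (p.dom.piecewise p.toFun q.toFun) q.toFun q.dom :=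
  (piecewise_eqOn_compl p.dom p.toFun q.toFun).mono hdom.subset_compl_left

def union : PartialWI2 where
  dom := p.dom ∪ q.dom
  toFun := p.dom.piecewise p.toFun q.toFun
  measurableSet_dom := p.measurableSet_dom.union q.measurableSet_dom
  dom_subset := union_subset p.dom_subset q.dom_subset
  measurable_domRestrict := by
    refine (measurable_domRestrict_iff (p.measurableSet_dom.union q.measurableSet_dom)).2
      fun t ht => ?_
    rw [union_inter_distrib_right, (piecewise_eqOn p.dom p.toFun q.toFun).inter_preimage_eq,
      (p.eqOn_piecewise_right q hdom).inter_preimage_eq]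
    exact ((measurable_domRestrict_iff p.measurableSet_dom).1 p.measurable_domRestrict t ht).union
      ((measurable_domRestrict_iff q.measurableSet_dom).1 q.measurable_domRestrict t ht)
  injOn := by
    have hp := piecewise_eqOn p.dom p.toFun q.toFun
    have hq := p.eqOn_piecewise_right q hdom
    refine (injOn_union hdom).2 ⟨p.injOn.congr hp.symm, q.injOn.congr hq.symm,
      fun x hx y hy => ?_⟩
    rw [hp hx, hq hy]
    exact himg.ne_of_mem (mem_image_of_mem _ hx) (mem_image_of_mem _ hy)
  mapsTo := mapsTo_union.2 ⟨p.mapsTo.congr (piecewise_eqOn p.dom p.toFun q.toFun).symm,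
    q.mapsTo.congr (p.eqOn_piecewise_right q hdom).symm⟩
  exists_dyadicMap := by
    rintro x (hx | hx)
    · rw [piecewise_eqOn p.dom p.toFun q.toFun hx]; exact p.exists_dyadicMap x hx
    · rw [p.eqOn_piecewise_right q hdom hx]; exact q.exists_dyadicMap x hx

lemma le_union : p ≤ p.union q hdom himg :=
  ⟨subset_union_left, piecewise_eqOn p.dom p.toFun q.toFun⟩

end union

section limit

def limitFun (P : ℕ → PartialWI2) (x : ℝ) : ℝ :=
  if h : ∃ n, x ∈ (P n).dom then (P h.choose).toFun x else 0

variable {P : ℕ → PartialWI2} (hP : Monotone P)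
include hP

lemma eqOn_limitFun (n : ℕ) : EqOn (limitFun P) (P n).toFun (P n).dom := by
  intro x hx
  have h : ∃ n, x ∈ (P n).dom := ⟨n, hx⟩
  rw [limitFun, dif_pos h]
  exact ((hP (le_max_left h.choose n)).2 h.choose_spec).symm.trans ((hP (le_max_right _ n)).2 hx)

def limit : PartialWI2 where
  dom := ⋃ n, (P n).dom
  toFun := limitFun P
  measurableSet_dom := .iUnion fun n => (P n).measurableSet_dom
  dom_subset := iUnion_subset fun n => (P n).dom_subset
  measurable_domRestrict := by
    refine (measurable_domRestrict_iff (.iUnion fun n => (P n).measurableSet_dom)).2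
      fun t ht => ?_
    rw [iUnion_inter]
    refine .iUnion fun n => ?_
    rw [(eqOn_limitFun hP n).inter_preimage_eq]
    exact (measurable_domRestrict_iff (P n).measurableSet_dom).1 (P n).measurable_domRestrict t ht
  injOn := by
    intro x hx y hy hxy
    obtain ⟨m, hxm⟩ := mem_iUnion.1 hx
    obtain ⟨n, hyn⟩ := mem_iUnion.1 hy
    have hxN := (hP (le_max_left m n)).1 hxm
    have hyN := (hP (le_max_right m n)).1 hyn
    rw [eqOn_limitFun hP _ hxN, eqOn_limitFun hP _ hyN] at hxy
    exact (P _).injOn hxN hyN hxy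
  mapsTo := mapsTo_iUnion.2 fun n => (P n).mapsTo.congr (eqOn_limitFun hP n).symm
  exists_dyadicMap x hx := by
    obtain ⟨n, hn⟩ := mem_iUnion.1 hx
    rw [eqOn_limitFun hP n hn]
    exact (P n).exists_dyadicMap x hn

lemma le_limit (n : ℕ) : P n ≤ limit hP :=
  ⟨subset_iUnion (fun n => (P n).dom) n, eqOn_limitFun hP n⟩

end limit

lemma exists_le_volume_Ico_diff_le_half :
    ∃ q, p ≤ q ∧ volume (Ico 0 1 \ q.dom) ≤ volume (Ico 0 1 \ p.dom) / 2 := by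
  set T := Ico (0 : ℝ) 1 \ p.dom
  set U := Ico (0 : ℝ) 1 \ p.toFun '' p.dom
  rcases eq_or_ne (volume T) 0 with hT | hT
  · exact ⟨p, le_rfl, by simp [T, hT]⟩
  have hU : MeasurableSet U := measurableSet_Ico.diff p.measurableSet_image
  obtain ⟨k, l, hkl⟩ := exists_volume_Ico_diff_dyadicMap_preimage_le hU (fun x hx => hx.1.1)
    (fun h => hT (le_zero_iff.1 (h ▸ p.volume_Ico_diff_dom_le))) (ENNReal.half_pos hT).ne'
  set A := T ∩ dyadicMap k l ⁻¹' U
  have hA : MeasurableSet A := (measurableSet_Ico.diff p.measurableSet_dom).inter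
    ((dyadicMap.measurableEmbedding k l).measurable hU)
  let r := ofDyadicMap k l hA (fun x hx => hx.1.1) (fun x hx => hx.2.1)
  have hdom : Disjoint p.dom r.dom := disjoint_left.2 fun x hx hxA => hxA.1.2 hx
  have himg : Disjoint (p.toFun '' p.dom) (r.toFun '' r.dom) :=
    disjoint_left.2 fun y hy ⟨x, hx, hxy⟩ => (hxy ▸ hx.2 : y ∈ U).2 hy
  refine ⟨p.union r hdom himg, p.le_union r hdom himg, le_trans (measure_mono ?_) hkl⟩
  rintro x ⟨hx, hxq⟩
  exact ⟨hx, fun hxU => hxq (Or.inr ⟨⟨hx, fun h => hxq (Or.inl h)⟩, hxU⟩)⟩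

lemma exists_le_volume_Ico_diff_eq_zero : ∃ q, p ≤ q ∧ volume (Ico 0 1 \ q.dom) = 0 := by
  choose step hle hhalf using exists_le_volume_Ico_diff_le_half
  set P : ℕ → PartialWI2 := fun n => step^[n] p
  have hP : Monotone P := monotone_nat_of_le_succ fun n => by
    simpa only [P, Function.iterate_succ_apply'] using hle (P n)
  have hdecay : ∀ n, volume (Ico 0 1 \ (P n).dom) ≤ 2⁻¹ ^ n := by
    intro n
    induction n with
    | zero => simpa using measure_mono (μ := volume) (sdiff_subset (s := Ico (0 : ℝ) 1))
    | succ n ih =>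
      calc volume (Ico 0 1 \ (P (n + 1)).dom) ≤ volume (Ico 0 1 \ (P n).dom) / 2 := by
            simpa only [P, Function.iterate_succ_apply'] using hhalf (P n)
        _ ≤ 2⁻¹ ^ n / 2 := by gcongr
        _ = 2⁻¹ ^ (n + 1) := by rw [pow_succ, div_eq_mul_inv]
  refine ⟨limit hP, le_limit hP 0, le_antisymm (ge_of_tendsto'
    (ENNReal.tendsto_pow_atTop_nhds_zero_of_lt_one (r := 2⁻¹) (by norm_num)) fun n => ?_) zero_le⟩
  exact (measure_mono (sdiff_subset_sdiff_right (subset_iUnion _ n))).trans (hdecay n)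

end PartialWI2

/-- A partial map of `WI₂` type, defined on a measurable `S ⊆ [0,1)`, extends
to a map of `WI₂` type defined on a measurable `S' ⊇ S` with `μ([0,1) \ S') = 0`. -/
theorem exists_WI2_extension (S : Set ℝ) (hS : MeasurableSet S) (hS1 : S ⊆ Ico (0:ℝ) 1)
    (v₀ : ℝ → ℝ) (hmeas : Measurable (S.restrict v₀)) (hinj : Set.InjOn v₀ S)
    (hmaps : Set.MapsTo v₀ S (Ico (0:ℝ) 1))
    (hform : ∀ x ∈ S, ∃ k l : ℕ, v₀ x = (x + l) / 2^k) :
    ∃ (S' : Set ℝ) (vtilde : ℝ → ℝ),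
      S ⊆ S' ∧ S' ⊆ Ico (0:ℝ) 1 ∧ MeasurableSet S' ∧
      volume (Ico (0:ℝ) 1 \ S') = 0 ∧
      Set.EqOn vtilde v₀ S ∧
      Measurable (S'.restrict vtilde) ∧ Set.InjOn vtilde S' ∧
      Set.MapsTo vtilde S' (Ico (0:ℝ) 1) ∧
      (∀ x ∈ S', ∃ k l : ℕ, vtilde x = (x + l) / 2^k) := by
  obtain ⟨q, ⟨hSq, hqv₀⟩, hnull⟩ :=
    PartialWI2.exists_le_volume_Ico_diff_eq_zero ⟨S, v₀, hS, hS1, hmeas, hinj, hmaps, hform⟩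
  exact ⟨q.dom, q.toFun, hSq, q.dom_subset, q.measurableSet_dom, hnull, hqv₀,
    q.measurable_domRestrict, q.injOn, q.mapsTo, q.exists_dyadicMap⟩
end
end

section
/- For every u ∈ WI₁ and every v ∈ WI₂, the set ⋂_{k≥0} (v∘u)^k([0,1)) has Lebesgue measure zero. -/
open MeasureTheory Set Real Filter
open scoped symmDiff Classical

noncomputable section

/-! On each piece of its partition a map in WI₁ is affine with slope at most `1/2`, and a map in
WI₂ is affine with slope at most `1` on each of the measurable sets `{x | v x = (x + l) / 2 ^ k}`.
Lebesgue measure on `ℝ` is the one-dimensional Hausdorff measure, so a map that is `r`-Lipschitz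
on each piece of a countable measurable cover of `s` multiplies the measure of `s` by at most `r`.
Hence `v ∘ u` halves the measure of every subset of `[0,1)`, which it maps into itself, and
`(v ∘ u)^k([0,1))` has measure at most `2^(-k)`. -/

open scoped NNReal ENNReal Topology

theorem lipschitzOnWith_of_eq_mul_add {f : ℝ → ℝ} {s : Set ℝ} {a b : ℝ} {r : ℝ≥0}
    (hf : ∀ x ∈ s, f x = a * x + b) (ha : |a| ≤ r) : LipschitzOnWith r f s :=
  LipschitzOnWith.of_dist_le_mul fun x hx y hy => by
    rw [Real.dist_eq, Real.dist_eq, hf x hx, hf y hy,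
      show a * x + b - (a * y + b) = a * (x - y) by ring, abs_mul]
    exact mul_le_mul_of_nonneg_right ha (abs_nonneg _)

theorem hausdorffMeasure_image_le_of_lipschitzOnWith_cover {X Y : Type*} [EMetricSpace X]
    [MeasurableSpace X] [BorelSpace X] [EMetricSpace Y] [MeasurableSpace Y] [BorelSpace Y]
    {f : X → Y} {K : ℝ≥0} {P : ℕ → Set X} {s : Set X} {d : ℝ} (hd : 0 ≤ d)
    (hP : ∀ n, MeasurableSet (P n)) (hf : ∀ n, LipschitzOnWith K f (P n)) (hs : s ⊆ ⋃ n, P n) :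
    μH[d] (f '' s) ≤ (K : ℝ≥0∞) ^ d * μH[d] s := by
  have hs' : f '' s ⊆ ⋃ n, f '' (s ∩ disjointed P n) := by
    rw [← image_iUnion, ← inter_iUnion, iUnion_disjointed, inter_eq_left.2 hs]
  calc μH[d] (f '' s) ≤ ∑' n, μH[d] (f '' (s ∩ disjointed P n)) :=
        (measure_mono hs').trans (measure_iUnion_le _)
    _ ≤ ∑' n, (K : ℝ≥0∞) ^ d * μH[d] (s ∩ disjointed P n) := ENNReal.tsum_le_tsum fun n =>
        ((hf n).mono (inter_subset_right.trans (disjointed_subset P n))).hausdorffMeasure_image_le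
          hd
    _ = (K : ℝ≥0∞) ^ d * μH[d].restrict s (⋃ n, disjointed P n) := by
        rw [ENNReal.tsum_mul_left,
          measure_iUnion (disjoint_disjointed P) (MeasurableSet.disjointed hP)]
        simp only [Measure.restrict_apply (MeasurableSet.disjointed hP _), inter_comm]
    _ ≤ (K : ℝ≥0∞) ^ d * μH[d] s :=
        mul_le_mul_right ((measure_mono (subset_univ _)).trans_eq (Measure.restrict_apply_univ s)) _

theorem volume_image_le_of_piecewise_affine {f : ℝ → ℝ} {r : ℝ≥0} {P : ℕ → Set ℝ} {s : Set ℝ}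
    (hP : ∀ n, MeasurableSet (P n)) (hs : s ⊆ ⋃ n, P n)
    (hf : ∀ n, ∃ a b : ℝ, |a| ≤ r ∧ ∀ x ∈ P n, f x = a * x + b) :
    volume (f '' s) ≤ r * volume s := by
  have hf' n : LipschitzOnWith r f (P n) :=
    have ⟨_, _, ha, hab⟩ := hf n; lipschitzOnWith_of_eq_mul_add hab ha
  simpa [hausdorffMeasure_real] using
    hausdorffMeasure_image_le_of_lipschitzOnWith_cover zero_le_one hP hf' hs

theorem measure_iInter_iterate_image_eq_zero {α : Type*} [MeasurableSpace α] {μ : Measure α}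
    {f : α → α} {s : Set α} {c : ℝ≥0∞} (hc : c < 1) (hs : μ s ≠ ∞) (hf : MapsTo f s s)
    (hμ : ∀ t ⊆ s, μ (f '' t) ≤ c * μ t) : μ (⋂ k, f^[k] '' s) = 0 := by
  have hle k : μ (f^[k] '' s) ≤ c ^ k * μ s := by
    induction k with
    | zero => simp
    | succ k ih =>
      rw [Function.iterate_succ', image_comp, pow_succ', mul_assoc]
      exact (hμ _ ((hf.iterate k).image_subset)).trans (by gcongr)
  have hlim : Tendsto (fun k : ℕ => c ^ k * μ s) atTop (𝓝 0) := by
    simpa using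
      ENNReal.Tendsto.mul_const (ENNReal.tendsto_pow_atTop_nhds_zero_of_lt_one hc) (Or.inr hs)
  exact le_antisymm (ge_of_tendsto' hlim fun k => (measure_mono (iInter_subset _ k)).trans (hle k))
    zero_le

theorem abs_inv_two_pow_succ_le (k : ℕ) : |((2 : ℝ) ^ (k + 1))⁻¹| ≤ ((2⁻¹ : ℝ≥0) : ℝ) := by
  rw [abs_of_pos (by positivity), NNReal.coe_inv, NNReal.coe_ofNat]
  exact inv_anti₀ two_pos (le_self_pow₀ one_le_two (Nat.succ_ne_zero k))

namespace MemWI1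

variable {u : ℝ → ℝ}

theorem mapsTo (hu : MemWI1 u) : MapsTo u (Ico 0 1) (Ico 0 1) := by
  obtain ⟨A, B, -, -, hA, -, hB, -, huA, huB⟩ := hu
  intro x ⟨hx0, hx1⟩
  have hpow k : (1 : ℝ) ≤ 2 ^ (k + 1) := one_le_pow₀ one_le_two
  by_cases hx : 1 / 2 ≤ x
  · obtain ⟨k, hk⟩ := mem_iUnion.1 (hA ▸ ⟨hx, hx1⟩ : x ∈ ⋃ k, A k)
    rw [huA k x hk]
    exact ⟨by positivity, (div_lt_one (by positivity)).2 (hx1.trans_le (hpow k))⟩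
  · obtain ⟨k, hk⟩ := mem_iUnion.1 (hB ▸ ⟨hx0, not_le.1 hx⟩ : x ∈ ⋃ k, B k)
    rw [huB k x hk]
    have hlow : -1 ≤ (x - 1) / 2 ^ (k + 1) := by
      rw [le_div_iff₀ (by positivity)]; nlinarith [hpow k]
    have hneg : (x - 1) / 2 ^ (k + 1) < 0 := div_neg_of_neg_of_pos (by linarith) (by positivity)
    exact ⟨by linarith, by linarith⟩

theorem volume_image_le (hu : MemWI1 u) {s : Set ℝ} (hs : s ⊆ Ico 0 1) :
    volume (u '' s) ≤ 2⁻¹ * volume s := by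
  obtain ⟨A, B, hAm, hBm, hA, -, hB, -, huA, huB⟩ := hu
  have hsA : s ∩ Ici (1 / 2) ⊆ ⋃ k, A k := hA ▸ fun x ⟨hxs, hx⟩ => ⟨hx, (hs hxs).2⟩
  have hsB : s \ Ici (1 / 2) ⊆ ⋃ k, B k := hB ▸ fun x ⟨hxs, hx⟩ => ⟨(hs hxs).1, not_le.1 hx⟩
  have hA' := volume_image_le_of_piecewise_affine (f := u) (r := 2⁻¹) hAm hsA fun k =>
    ⟨_, 0, abs_inv_two_pow_succ_le k, fun x hx => by rw [huA k x hx]; ring⟩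
  have hB' := volume_image_le_of_piecewise_affine (f := u) (r := 2⁻¹) hBm hsB fun k =>
    ⟨_, 1 - ((2 : ℝ) ^ (k + 1))⁻¹, abs_inv_two_pow_succ_le k,
      fun x hx => by rw [huB k x hx]; ring⟩
  calc volume (u '' s) = volume (u '' (s ∩ Ici (1 / 2)) ∪ u '' (s \ Ici (1 / 2))) := by
        rw [← image_union, inter_union_sdiff]
    _ ≤ 2⁻¹ * volume (s ∩ Ici (1 / 2)) + 2⁻¹ * volume (s \ Ici (1 / 2)) := by
        simpa using (measure_union_le _ _).trans (add_le_add hA' hB')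
    _ = 2⁻¹ * volume s := by rw [← mul_add, measure_inter_add_sdiff s measurableSet_Ici]

end MemWI1

theorem MemWI2.volume_image_le {v : ℝ → ℝ} (hv : MemWI2 v) {s : Set ℝ} (hs : s ⊆ Ico 0 1) :
    volume (v '' s) ≤ volume s := by
  obtain ⟨hmeas, -, -, hkl⟩ := hv
  let P (n : ℕ) : Set ℝ :=
    Subtype.val '' {x : Ico (0 : ℝ) 1 | v x = (x + (Nat.unpair n).2) / 2 ^ (Nat.unpair n).1}
  have hPm n : MeasurableSet (P n) := measurableSet_Ico.subtype_image <|
    measurableSet_eq_fun hmeas ((measurable_subtype_coe.add_const _).div_const _)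
  have hsP : s ⊆ ⋃ n, P n := fun x hx => by
    obtain ⟨k, l, h⟩ := hkl x (hs hx)
    exact mem_iUnion.2 ⟨Nat.pair k l, ⟨x, hs hx⟩, by simpa using h, rfl⟩
  simpa using volume_image_le_of_piecewise_affine (r := 1) hPm hsP fun n =>
    ⟨(2 ^ (Nat.unpair n).1)⁻¹, (Nat.unpair n).2 / 2 ^ (Nat.unpair n).1,
      by simpa [abs_of_pos] using inv_le_one_of_one_le₀ (one_le_pow₀ one_le_two),
      by rintro _ ⟨x, hx, rfl⟩; rw [hx]; ring⟩

/-- For every `u ∈ WI₁` and `v ∈ WI₂`, the set `⋂_{k≥0} (v∘u)^k([0,1))` is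
Lebesgue null. -/
theorem iInter_iterate_null (u v : ℝ → ℝ) (hu : MemWI1 u) (hv : MemWI2 v) :
    volume (⋂ k : ℕ, (v ∘ u)^[k] '' Ico (0:ℝ) 1) = 0 := by
  refine measure_iInter_iterate_image_eq_zero (c := 2⁻¹) (by norm_num) (by simp)
    (hv.2.1.comp hu.mapsTo) fun t ht => ?_
  rw [image_comp]
  exact (hv.volume_image_le (hu.mapsTo.mono_left ht).image_subset).trans (hu.volume_image_le ht)

end
end
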